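/- arXiv:1006.1782 — 4 statements merged into one kernel-verified Lean document; each statement's English description precedes it below -/
import Mathlib

section
/- Let ℓ > 2 be a prime and let G be a subgroup of GL₂(𝔽_ℓ) such that every element of G fixes at least one line of 𝔽_ℓ² but G fixes no line globally. Then the order of the image H of G in PGL₂(𝔽_ℓ) is not divisible by ℓ. -/
/-!
An element of order `ℓ` of `GL₂(𝔽_ℓ)` fixing a line is a transvection: in a suitable basis it is
`!![1, a; 0, 1]`. If `ℓ` divided `|H|`, hence `|G|`, then `G` would contain such a `u`; since `G`
fixes no line, some `h ∈ G` moves the fixed line of `u`, and in the basis formed by the two fixed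
vectors, `u` and `h u h⁻¹` become `!![1, a; 0, 1]` and `!![1, 0; y, 1]` with `a y ≠ 0`. The
products `uⁱ (h u h⁻¹) = !![1 + i a y, i a; y, 1]` have determinant `1` and trace `2 + i a y`, which
runs over all of `𝔽_ℓ`; choosing the trace `s` with `s² - 4` a nonsquare, the characteristic
polynomial has no root, so this element of `G` fixes no line.
-/

open Matrix MulAction

variable (ℓ : ℕ) [Fact (Nat.Prime ℓ)]

/-- The group `GL₂(𝔽_ℓ)`. -/
abbrev GL2 := GL (Fin 2) (ZMod ℓ)

/-- The group `PGL₂(𝔽_ℓ)`, the quotient of `GL₂(𝔽_ℓ)` by its center (the scalar matrices). -/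
abbrev PGL2 := GL2 ℓ ⧸ Subgroup.center (GL2 ℓ)

/-- `Ω`, the set of one-dimensional linear subspaces (lines) of `𝔽_ℓ²`. -/
def Line := {W : Submodule (ZMod ℓ) (Fin 2 → ZMod ℓ) // Module.finrank (ZMod ℓ) W = 1}

variable {ℓ}

/-- The natural action of `GL₂(𝔽_ℓ)` on the set of lines of `𝔽_ℓ²`. -/
instance : MulAction (GL2 ℓ) (Line ℓ) where
  smul g W := ⟨W.1.map (Matrix.mulVecLin (g : Matrix (Fin 2) (Fin 2) (ZMod ℓ))), by
    have h1 : ∀ (A : GL2 ℓ) (p : Submodule (ZMod ℓ) (Fin 2 → ZMod ℓ)),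
        Module.finrank (ZMod ℓ) (p.map (Matrix.mulVecLin (A : Matrix (Fin 2) (Fin 2) (ZMod ℓ))))
          ≤ Module.finrank (ZMod ℓ) p :=
      fun A p => Submodule.finrank_map_le _ _
    have h2 := h1 g⁻¹ (W.1.map (Matrix.mulVecLin (g : Matrix (Fin 2) (Fin 2) (ZMod ℓ))))
    rw [← Submodule.map_comp, ← Matrix.mulVecLin_mul] at h2
    have h0 : ((g⁻¹ : GL2 ℓ) : Matrix (Fin 2) (Fin 2) (ZMod ℓ))
        * (g : Matrix (Fin 2) (Fin 2) (ZMod ℓ)) = 1 := by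
      rw [← Units.val_mul, inv_mul_cancel, Units.val_one]
    rw [h0, Matrix.mulVecLin_one, Submodule.map_id] at h2
    have h3 := h1 g W.1
    have h4 := W.2
    omega⟩
  one_smul W := by
    apply Subtype.ext
    show Submodule.map _ _ = _
    simp
  mul_smul g h W := by
    apply Subtype.ext
    show Submodule.map _ _ = Submodule.map _ (Submodule.map _ _)
    rw [← Submodule.map_comp, Units.val_mul, Matrix.mulVecLin_mul]

instance : Finite (Line ℓ) := by
  have : Finite (Submodule (ZMod ℓ) (Fin 2 → ZMod ℓ)) :=
    Finite.of_injective (fun W => (W : Set (Fin 2 → ZMod ℓ))) SetLike.coe_injective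
  exact Subtype.finite

/-- The sign of `g ∈ GL₂(𝔽_ℓ)` as a permutation of the set of lines of `𝔽_ℓ²`.  Since the
scalar matrices act trivially on lines, this is also the sign `σ(h)` of the image `h` of `g`
in `PGL₂(𝔽_ℓ)` acting on the lines. -/
noncomputable def lineSign (g : GL2 ℓ) : ℤˣ :=
  letI : Fintype (Line ℓ) := Fintype.ofFinite _
  letI : DecidableEq (Line ℓ) := Classical.decEq _
  Equiv.Perm.sign (MulAction.toPerm g : Equiv.Perm (Line ℓ))

/-- The image of a subgroup of `GL₂(𝔽_ℓ)` in `PGL₂(𝔽_ℓ)`. -/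
def pglImage (G : Subgroup (GL2 ℓ)) : Subgroup (PGL2 ℓ) :=
  G.map (QuotientGroup.mk' (Subgroup.center (GL2 ℓ)))

theorem FiniteField.exists_not_isSquare_sq_sub_four {K : Type*} [Field K] [Finite K]
    (hK : ringChar K ≠ 2) : ∃ s : K, ¬IsSquare (s ^ 2 - 4) := by
  have h2 : (2 : K) ≠ 0 := Ring.two_ne_zero hK
  by_contra! hsq
  -- `s ^ 2 - 4 = w ^ 2` gives `s = e + e⁻¹` with `e = (s + w) / 2`, but there are too few units
  have hsurj : Function.Surjective fun e : Kˣ => (e + e⁻¹ : K) := by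
    intro s
    obtain ⟨w, hw⟩ := hsq s
    have hsw : s + w ≠ 0 := by
      intro h0
      have h4 : (2 : K) * 2 = 0 := by linear_combination (s - w) * h0 - hw
      exact mul_self_ne_zero.mpr h2 h4
    have hinv : ((s + w) / 2)⁻¹ = (s - w) / 2 := by
      apply inv_eq_of_mul_eq_one_right
      field_simp
      linear_combination hw
    refine ⟨Units.mk0 _ (div_ne_zero hsw h2), ?_⟩
    simp only [Units.val_inv_eq_inv_val, Units.val_mk0, hinv]
    field_simp
    ring
  exact (Nat.card_le_card_of_surjective _ hsurj).not_gt (natCard_units_lt K)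

namespace Matrix

theorem isSquare_trace_sq_sub_four_mul_det {K : Type*} [Field K]
    {M : Matrix (Fin 2) (Fin 2) K} {z : Fin 2 → K} (hz : z ≠ 0) {c : K}
    (hMz : M *ᵥ z = c • z) : IsSquare (M.trace ^ 2 - 4 * M.det) := by
  have hchar : (c - M 0 0) * (c - M 1 1) - M 0 1 * M 1 0 = 0 := by
    have hdet : (scalar (Fin 2) c - M).det = 0 :=
      exists_mulVec_eq_zero_iff.mp ⟨z, hz, by rw [sub_mulVec, hMz]; simp⟩
    simpa [det_fin_two] using hdet
  refine ⟨2 * c - M.trace, ?_⟩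
  rw [trace_fin_two, det_fin_two]
  linear_combination (-4) * hchar

theorem eq_unipotent_upper_of_mulVec_single_zero {R : Type*} [CommRing R]
    {M : Matrix (Fin 2) (Fin 2) R} (hM : M *ᵥ Pi.single 0 1 = Pi.single 0 1) (hdet : M.det = 1) :
    M = !![1, M 0 1; 0, 1] := by
  rw [mulVec_single_one] at hM
  have h00 : M 0 0 = 1 := by simpa using congrFun hM 0
  have h10 : M 1 0 = 0 := by simpa using congrFun hM 1
  have h11 : M 1 1 = 1 := by simpa [det_fin_two, h00, h10] using hdet
  ext i j
  fin_cases i <;> fin_cases j <;> simp [h00, h10, h11]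

theorem eq_unipotent_lower_of_mulVec_single_one {R : Type*} [CommRing R]
    {M : Matrix (Fin 2) (Fin 2) R} (hM : M *ᵥ Pi.single 1 1 = Pi.single 1 1) (hdet : M.det = 1) :
    M = !![1, 0; M 1 0, 1] := by
  rw [mulVec_single_one] at hM
  have h01 : M 0 1 = 0 := by simpa using congrFun hM 0
  have h11 : M 1 1 = 1 := by simpa using congrFun hM 1
  have h00 : M 0 0 = 1 := by simpa [det_fin_two, h01, h11] using hdet
  ext i j
  fin_cases i <;> fin_cases j <;> simp [h00, h01, h11]

theorem unipotent_upper_pow {R : Type*} [CommRing R] (a : R) (k : ℕ) :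
    !![1, a; 0, 1] ^ k = !![1, k * a; 0, 1] := by
  induction k with
  | zero => simp [one_fin_two]
  | succ k ih => rw [pow_succ, ih, mul_fin_two]; push_cast; ring_nf

section PrimeField

variable {p : ℕ} [Fact p.Prime]

theorem det_eq_one_of_pow_eq_one {n : Type*} [Fintype n] [DecidableEq n]
    {M : Matrix n n (ZMod p)} (hM : M ^ p = 1) : M.det = 1 := by
  rw [← ZMod.pow_card M.det, ← det_pow, hM, det_one]

theorem eq_one_of_mulVec_eq_smul_of_pow_eq_one {n : Type*} [Fintype n] [DecidableEq n]
    {M : Matrix n n (ZMod p)} (hM : M ^ p = 1) {z : n → ZMod p} (hz : z ≠ 0) {c : ZMod p}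
    (hMz : M *ᵥ z = c • z) : c = 1 := by
  have hpow : ∀ k : ℕ, (M ^ k) *ᵥ z = c ^ k • z := by
    intro k
    induction k with
    | zero => simp
    | succ k ih => rw [pow_succ, ← mulVec_mulVec, hMz, mulVec_smul, ih, smul_smul, pow_succ']
  have h := hpow p
  rw [hM, one_mulVec, ZMod.pow_card] at h
  have : (c - 1) • z = 0 := by rw [sub_smul, one_smul, ← h, sub_self]
  exact sub_eq_zero.mp ((smul_eq_zero.mp this).resolve_right hz)

theorem exists_unipotent_upper_eq_of_orderOf_eq {M : Matrix (Fin 2) (Fin 2) (ZMod p)}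
    (hM : orderOf M = p) (hfix : M *ᵥ Pi.single 0 1 = Pi.single 0 1) :
    ∃ a ≠ 0, M = !![1, a; 0, 1] := by
  have hMp : M ^ p = 1 := orderOf_dvd_iff_pow_eq_one.mp (dvd_of_eq hM)
  have hshape := eq_unipotent_upper_of_mulVec_single_zero hfix (det_eq_one_of_pow_eq_one hMp)
  refine ⟨M 0 1, fun ha => ?_, hshape⟩
  rw [hshape, ha, ← one_fin_two, orderOf_one] at hM
  exact (Fact.out : p.Prime).one_lt.ne hM

theorem exists_unipotent_lower_eq_of_orderOf_eq {M : Matrix (Fin 2) (Fin 2) (ZMod p)}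
    (hM : orderOf M = p) (hfix : M *ᵥ Pi.single 1 1 = Pi.single 1 1) :
    ∃ a ≠ 0, M = !![1, 0; a, 1] := by
  have hMp : M ^ p = 1 := orderOf_dvd_iff_pow_eq_one.mp (dvd_of_eq hM)
  have hshape := eq_unipotent_lower_of_mulVec_single_one hfix (det_eq_one_of_pow_eq_one hMp)
  refine ⟨M 1 0, fun ha => ?_, hshape⟩
  rw [hshape, ha, ← one_fin_two, orderOf_one] at hM
  exact (Fact.out : p.Prime).one_lt.ne hM

theorem exists_not_isSquare_discr_unipotent_pow_mul (hp : p ≠ 2) {a y : ZMod p} (ha : a ≠ 0)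
    (hy : y ≠ 0) :
    ∃ i : ℕ, ¬IsSquare ((!![1, a; 0, 1] ^ i * !![1, 0; y, 1]).trace ^ 2 -
      4 * (!![1, a; 0, 1] ^ i * !![1, 0; y, 1]).det) := by
  obtain ⟨s, hs⟩ := FiniteField.exists_not_isSquare_sq_sub_four (K := ZMod p)
    (by rwa [ZMod.ringChar_zmod_n])
  set i := ((s - 2) / (a * y)).val
  have hi : (i : ZMod p) * a * y = s - 2 := by
    rw [ZMod.natCast_zmod_val]
    field_simp
  refine ⟨i, ?_⟩
  convert hs using 2
  simp only [unipotent_upper_pow, mul_fin_two, trace_fin_two, det_fin_two_of, of_apply,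
    cons_val', cons_val_zero, cons_val_one, empty_val', cons_val_fin_one]
  linear_combination (s + 2 + i * a * y) * hi

end PrimeField

namespace GeneralLinearGroup

variable {n : Type*} [Fintype n] [DecidableEq n]

theorem exists_mulVec_eq_single {K : Type*} [Field K] {v : n → n → K}
    (hv : LinearIndependent K v) :
    ∃ Q : GL n K, ∀ j, (Q : Matrix n n K) *ᵥ v j = Pi.single j 1 := by
  have hP : IsUnit (Matrix.of fun i j => v j i) := linearIndependent_cols_iff_isUnit.mp hv
  refine ⟨hP.unit⁻¹, fun j => ?_⟩
  have hcol : v j = (hP.unit : Matrix n n K) *ᵥ Pi.single j 1 := by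
    rw [hP.unit_spec, mulVec_single_one]
    rfl
  rw [hcol, mulVec_mulVec, Units.inv_mul, one_mulVec]

variable {R : Type*} [CommRing R]

theorem conj_mulVec_mulVec (x g : GL n R) (w : n → R) :
    ((MulAut.conj x g : GL n R) : Matrix n n R) *ᵥ ((x : Matrix n n R) *ᵥ w) =
      (x : Matrix n n R) *ᵥ ((g : Matrix n n R) *ᵥ w) := by
  simp [MulAut.conj_apply, mulVec_mulVec, mul_assoc]

theorem orderOf_coe_conj (x g : GL n R) :
    orderOf ((MulAut.conj x g : GL n R) : Matrix n n R) = orderOf g := by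
  rw [orderOf_units, MulEquiv.orderOf_eq]

end GeneralLinearGroup

end Matrix

namespace Line

variable {ℓ : ℕ} [Fact ℓ.Prime]

theorem exists_eq_span (W : Line ℓ) : ∃ w ≠ 0, W.1 = Submodule.span (ZMod ℓ) {w} := by
  obtain ⟨w, hwW, hw0⟩ := Submodule.exists_mem_ne_zero_of_ne_bot (p := W.1) fun h => by
    have hW := W.2
    rw [h, finrank_bot] at hW
    exact zero_ne_one hW
  refine ⟨w, hw0, (Submodule.eq_of_le_of_finrank_le ?_ ?_).symm⟩
  · rwa [Submodule.span_singleton_le_iff_mem]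
  · rw [finrank_span_singleton hw0, W.2]

theorem val_smul_eq_span {W : Line ℓ} {w : Fin 2 → ZMod ℓ}
    (hW : W.1 = Submodule.span (ZMod ℓ) {w}) (g : GL2 ℓ) :
    (g • W).1 = Submodule.span (ZMod ℓ) {(g : Matrix (Fin 2) (Fin 2) (ZMod ℓ)) *ᵥ w} := by
  change W.1.map _ = _
  rw [hW, Submodule.map_span, Set.image_singleton, mulVecLin_apply]

theorem exists_mulVec_eq_smul_of_smul_eq {W : Line ℓ} {w : Fin 2 → ZMod ℓ}
    (hW : W.1 = Submodule.span (ZMod ℓ) {w}) {g : GL2 ℓ} (hg : g • W = W) :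
    ∃ c : ZMod ℓ, (g : Matrix (Fin 2) (Fin 2) (ZMod ℓ)) *ᵥ w = c • w := by
  have hgw : (g : Matrix (Fin 2) (Fin 2) (ZMod ℓ)) *ᵥ w ∈ W.1 := by
    rw [← hg, val_smul_eq_span hW]
    exact Submodule.mem_span_singleton_self _
  obtain ⟨c, hc⟩ := Submodule.mem_span_singleton.mp (hW ▸ hgw)
  exact ⟨c, hc.symm⟩

theorem linearIndependent_of_ne {W W' : Line ℓ} {w w' : Fin 2 → ZMod ℓ}
    (hW : W.1 = Submodule.span (ZMod ℓ) {w}) (hW' : W'.1 = Submodule.span (ZMod ℓ) {w'})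
    (hne : W ≠ W') : LinearIndependent (ZMod ℓ) ![w, w'] := by
  rw [linearIndependent_fin2]
  refine ⟨fun (h0 : w' = 0) => ?_, fun a (ha : a • w' = w) => hne (Subtype.ext ?_)⟩
  · have hW'1 := W'.2
    rw [hW', h0, Submodule.span_zero_singleton, finrank_bot] at hW'1
    exact zero_ne_one hW'1
  · refine Submodule.eq_of_le_of_finrank_eq ?_ (W.2.trans W'.2.symm)
    rw [hW, hW', Submodule.span_singleton_le_iff_mem, Submodule.mem_span_singleton]
    exact ⟨a, ha⟩

end Line

open Matrix.GeneralLinearGroup in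
theorem exists_conj_eq_unipotents {ℓ : ℕ} [Fact ℓ.Prime] {u h : GL2 ℓ}
    (hu : orderOf u = ℓ) {w : Fin 2 → ZMod ℓ} {c : ZMod ℓ}
    (huw : (u : Matrix (Fin 2) (Fin 2) (ZMod ℓ)) *ᵥ w = c • w)
    (hli : LinearIndependent (ZMod ℓ) ![w, (h : Matrix (Fin 2) (Fin 2) (ZMod ℓ)) *ᵥ w]) :
    ∃ Q : GL2 ℓ, ∃ a y : ZMod ℓ, a ≠ 0 ∧ y ≠ 0 ∧
      ((MulAut.conj Q u : GL2 ℓ) : Matrix (Fin 2) (Fin 2) (ZMod ℓ)) = !![1, a; 0, 1] ∧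
      ((MulAut.conj Q (MulAut.conj h u) : GL2 ℓ) : Matrix (Fin 2) (Fin 2) (ZMod ℓ)) =
        !![1, 0; y, 1] := by
  have huw : (u : Matrix (Fin 2) (Fin 2) (ZMod ℓ)) *ᵥ w = w := by
    have hup : (u : Matrix (Fin 2) (Fin 2) (ZMod ℓ)) ^ ℓ = 1 :=
      orderOf_dvd_iff_pow_eq_one.mp (dvd_of_eq (by rw [orderOf_units, hu]))
    rw [huw, eq_one_of_mulVec_eq_smul_of_pow_eq_one hup (hli.ne_zero 0) huw, one_smul]
  obtain ⟨Q, hQ⟩ := exists_mulVec_eq_single hli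
  obtain ⟨a, ha, hU⟩ := exists_unipotent_upper_eq_of_orderOf_eq
    (M := ((MulAut.conj Q u : GL2 ℓ) : Matrix (Fin 2) (Fin 2) (ZMod ℓ)))
    (by rw [orderOf_coe_conj, hu])
    (by rw [← hQ 0, cons_val_zero, conj_mulVec_mulVec, huw])
  obtain ⟨y, hy, hV⟩ := exists_unipotent_lower_eq_of_orderOf_eq
    (M := ((MulAut.conj Q (MulAut.conj h u) : GL2 ℓ) : Matrix (Fin 2) (Fin 2) (ZMod ℓ)))
    (by rw [orderOf_coe_conj, MulEquiv.orderOf_eq, hu])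
    (by rw [← hQ 1, cons_val_one, cons_val_zero, conj_mulVec_mulVec, conj_mulVec_mulVec, huw])
  exact ⟨Q, a, y, ha, hy, hU, hV⟩

/-- If `ℓ > 2` is prime and `G ⊆ GL₂(𝔽_ℓ)` is a subgroup such that every element of `G` fixes
a line of `𝔽_ℓ²` but `G` fixes no line globally, then `ℓ` does not divide the order of the
image `H` of `G` in `PGL₂(𝔽_ℓ)`. -/
theorem stmt8 (ℓ : ℕ) [Fact (Nat.Prime ℓ)] (hl : 2 < ℓ) (G : Subgroup (GL2 ℓ))
    (hloc : ∀ g ∈ G, ∃ W : Line ℓ, g • W = W)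
    (hglob : ¬ ∃ W : Line ℓ, ∀ g ∈ G, g • W = W) :
    ¬ ℓ ∣ Nat.card (pglImage G) := by
  intro hdvd
  obtain ⟨u, hu⟩ := exists_prime_orderOf_dvd_card' ℓ (hdvd.trans (G.card_map_dvd _))
  obtain ⟨W, hW⟩ := hloc u u.2
  obtain ⟨w, -, hWw⟩ := W.exists_eq_span
  obtain ⟨c, huw⟩ := Line.exists_mulVec_eq_smul_of_smul_eq hWw hW
  obtain ⟨h, hhG, hhW⟩ : ∃ h ∈ G, h • W ≠ W := by
    push Not at hglob
    exact hglob W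
  obtain ⟨Q, a, y, ha, hy, hU, hV⟩ :=
    exists_conj_eq_unipotents (by rwa [Subgroup.orderOf_coe]) huw
    (Line.linearIndependent_of_ne hWw (Line.val_smul_eq_span hWw h) hhW.symm)
  obtain ⟨i, hi⟩ := Matrix.exists_not_isSquare_discr_unipotent_pow_mul hl.ne' ha hy
  set g := (u : GL2 ℓ) ^ i * MulAut.conj h u
  obtain ⟨W', hW'⟩ := hloc g (G.mul_mem (G.pow_mem u.2 i)
    (G.mul_mem (G.mul_mem hhG u.2) (G.inv_mem hhG)))
  have hQW' : MulAut.conj Q g • (Q • W') = Q • W' := by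
    rw [MulAut.conj_apply, smul_smul, inv_mul_cancel_right, mul_smul, hW']
  obtain ⟨z, hz, hQWz⟩ := (Q • W').exists_eq_span
  obtain ⟨c', hc'⟩ := Line.exists_mulVec_eq_smul_of_smul_eq hQWz hQW'
  rw [map_mul, map_pow, Units.val_mul, Units.val_pow_eq_pow_val, hU, hV] at hc'
  exact hi (Matrix.isSquare_trace_sq_sub_four_mul_det hz hc')
end

section
/- Let ℓ ≡ 3 (mod 4) be a prime with ℓ > 3, let α be a generator of 𝔽_ℓ^×, and let G ⊆ GL₂(𝔽_ℓ) be the set of matrices of the form diag(α^i, α^j) and antidiag(α^i, α^j) with i ≡ j (mod 2). Then G is a subgroup of GL₂(𝔽_ℓ), the determinant map G → 𝔽_ℓ^× is surjective, every element of G fixes at least 2 lines of 𝔽_ℓ², and G fixes no line. -/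
open Matrix MulAction

variable (ℓ : ℕ) [Fact (Nat.Prime ℓ)]

variable {ℓ}

section StmtAux

variable {ℓ : ℕ} [Fact (Nat.Prime ℓ)]

lemma unit_mul_inv' (u : (ZMod ℓ)ˣ) : (↑u : ZMod ℓ) * ↑u⁻¹ = 1 := by
  rw [← Units.val_mul, mul_inv_cancel, Units.val_one]

lemma unit_inv_mul' (u : (ZMod ℓ)ˣ) : (↑u⁻¹ : ZMod ℓ) * ↑u = 1 := by
  rw [← Units.val_mul, inv_mul_cancel, Units.val_one]

/-- The diagonal element of `GL₂`. -/
def diagGL (a b : (ZMod ℓ)ˣ) : GL2 ℓ :=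
  ⟨!![(a : ZMod ℓ), 0; 0, (b : ZMod ℓ)],
   !![((a⁻¹ : (ZMod ℓ)ˣ) : ZMod ℓ), 0; 0, ((b⁻¹ : (ZMod ℓ)ˣ) : ZMod ℓ)],
   by rw [Matrix.mul_fin_two, Matrix.one_fin_two, unit_mul_inv', unit_mul_inv']
      simp only [mul_zero, zero_mul, add_zero, zero_add],
   by rw [Matrix.mul_fin_two, Matrix.one_fin_two, unit_inv_mul', unit_inv_mul']
      simp only [mul_zero, zero_mul, add_zero, zero_add]⟩

/-- The antidiagonal element of `GL₂`. -/
def adiagGL (a b : (ZMod ℓ)ˣ) : GL2 ℓ :=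
  ⟨!![0, (a : ZMod ℓ); (b : ZMod ℓ), 0],
   !![0, ((b⁻¹ : (ZMod ℓ)ˣ) : ZMod ℓ); ((a⁻¹ : (ZMod ℓ)ˣ) : ZMod ℓ), 0],
   by rw [Matrix.mul_fin_two, Matrix.one_fin_two, unit_mul_inv', unit_mul_inv']
      simp only [mul_zero, zero_mul, add_zero, zero_add],
   by rw [Matrix.mul_fin_two, Matrix.one_fin_two, unit_inv_mul', unit_inv_mul']
      simp only [mul_zero, zero_mul, add_zero, zero_add]⟩

lemma diagGL_coe (a b : (ZMod ℓ)ˣ) :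
    ((diagGL a b : GL2 ℓ) : Matrix (Fin 2) (Fin 2) (ZMod ℓ))
      = !![(a : ZMod ℓ), 0; 0, (b : ZMod ℓ)] := rfl

lemma adiagGL_coe (a b : (ZMod ℓ)ˣ) :
    ((adiagGL a b : GL2 ℓ) : Matrix (Fin 2) (Fin 2) (ZMod ℓ))
      = !![0, (a : ZMod ℓ); (b : ZMod ℓ), 0] := rfl

/-- The line spanned by a nonzero vector. -/
def lineOf (v : Fin 2 → ZMod ℓ) (hv : v ≠ 0) : Line ℓ :=
  ⟨Submodule.span (ZMod ℓ) {v}, finrank_span_singleton hv⟩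

lemma smul_line_coe (g : GL2 ℓ) (W : Line ℓ) :
    (g • W).1 = W.1.map (Matrix.mulVecLin (g : Matrix (Fin 2) (Fin 2) (ZMod ℓ))) := rfl

lemma fixes_of_eigen (g : GL2 ℓ) {v : Fin 2 → ZMod ℓ} (hv : v ≠ 0) {c : ZMod ℓ} (hc : c ≠ 0)
    (h : (g : Matrix (Fin 2) (Fin 2) (ZMod ℓ)).mulVec v = c • v) :
    g • lineOf v hv = lineOf v hv := by
  apply Subtype.ext
  rw [smul_line_coe]
  show (Submodule.span (ZMod ℓ) {v}).map _ = Submodule.span (ZMod ℓ) {v}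
  rw [Submodule.map_span, Set.image_singleton, Matrix.mulVecLin_apply, h]
  exact Submodule.span_singleton_smul_eq (isUnit_iff_ne_zero.mpr hc) v

lemma lineOf_ne {v w : Fin 2 → ZMod ℓ} (hv : v ≠ 0) (hw : w ≠ 0)
    (h : w ∉ Submodule.span (ZMod ℓ) {v}) : lineOf v hv ≠ lineOf w hw := by
  intro he
  apply h
  have hs : Submodule.span (ZMod ℓ) {v} = Submodule.span (ZMod ℓ) {w} := congrArg Subtype.val he
  rw [hs]
  exact Submodule.mem_span_singleton_self w

lemma two_le_card_fixed {g : GL2 ℓ} {W1 W2 : Line ℓ} (h1 : g • W1 = W1) (h2 : g • W2 = W2)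
    (hne : W1 ≠ W2) : 2 ≤ Nat.card {W : Line ℓ // g • W = W} := by
  have hnt : Nontrivial {W : Line ℓ // g • W = W} :=
    ⟨⟨⟨W1, h1⟩, ⟨W2, h2⟩, fun h => hne (congrArg Subtype.val h)⟩⟩
  letI : Fintype {W : Line ℓ // g • W = W} := Fintype.ofFinite _
  rw [Nat.card_eq_fintype_card]
  exact Fintype.one_lt_card_iff_nontrivial.mpr hnt

lemma orderOf_gen (α : (ZMod ℓ)ˣ) (hα : ∀ x : (ZMod ℓ)ˣ, x ∈ Subgroup.zpowers α) :
    orderOf α = ℓ - 1 := by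
  rw [orderOf_eq_card_of_forall_mem_zpowers hα, Nat.card_eq_fintype_card, ZMod.card_units]

lemma pow_half_eq_neg_one (hl : 3 < ℓ) (hmod : ℓ % 4 = 3) (α : (ZMod ℓ)ˣ)
    (hα : ∀ x : (ZMod ℓ)ˣ, x ∈ Subgroup.zpowers α) : α ^ ((ℓ - 1) / 2) = -1 := by
  have hord := orderOf_gen α hα
  have hsq : (α ^ ((ℓ - 1) / 2)) ^ 2 = 1 := by
    rw [← pow_mul]
    have h2 : (ℓ - 1) / 2 * 2 = ℓ - 1 := by omega
    rw [h2, ← hord, pow_orderOf_eq_one]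
  have hne : α ^ ((ℓ - 1) / 2) ≠ 1 := by
    intro h
    have hd := orderOf_dvd_of_pow_eq_one h
    rw [hord] at hd
    have := Nat.le_of_dvd (by omega) hd
    omega
  have hx2 : ((α ^ ((ℓ - 1) / 2) : (ZMod ℓ)ˣ) : ZMod ℓ) ^ 2 = 1 := by
    rw [← Units.val_pow_eq_pow_val, hsq, Units.val_one]
  have hfac : (((α ^ ((ℓ - 1) / 2) : (ZMod ℓ)ˣ) : ZMod ℓ) - 1)
      * (((α ^ ((ℓ - 1) / 2) : (ZMod ℓ)ˣ) : ZMod ℓ) + 1) = 0 := by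
    linear_combination hx2
  rcases mul_eq_zero.mp hfac with h | h
  · exact absurd (Units.ext (by rw [Units.val_one]; exact sub_eq_zero.mp h)) hne
  · apply Units.ext
    rw [Units.val_neg, Units.val_one]
    exact eq_neg_of_add_eq_zero_left h

end StmtAux

section Helpers
variable {ℓ : ℕ} [Fact (Nat.Prime ℓ)]

lemma funext_fin2 {u w : Fin 2 → ZMod ℓ} (h0 : u 0 = w 0) (h1 : u 1 = w 1) : u = w := by
  funext k
  fin_cases k
  · exact h0
  · exact h1

lemma mulVec_apply_zero (M : Matrix (Fin 2) (Fin 2) (ZMod ℓ)) (v : Fin 2 → ZMod ℓ) :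
    (M.mulVec v) 0 = M 0 0 * v 0 + M 0 1 * v 1 := by
  simp [Matrix.mulVec, dotProduct, Fin.sum_univ_two]

lemma mulVec_apply_one (M : Matrix (Fin 2) (Fin 2) (ZMod ℓ)) (v : Fin 2 → ZMod ℓ) :
    (M.mulVec v) 1 = M 1 0 * v 0 + M 1 1 * v 1 := by
  simp [Matrix.mulVec, dotProduct, Fin.sum_univ_two]

example (a b x y : ZMod ℓ) : (!![a,0;0,b].mulVec ![x,y]) 0 = a * x := by
  rw [mulVec_apply_zero]
  simp

example (a b x y c : ZMod ℓ) (h : c • ![x,y] = !![a,0;0,b].mulVec ![x,y]) : c * x = a * x := by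
  have h0 := congrFun h 0
  rw [mulVec_apply_zero] at h0
  simpa using h0

lemma entry00 (p q r s : ZMod ℓ) : (!![p,q;r,s] : Matrix (Fin 2) (Fin 2) (ZMod ℓ)) 0 0 = p := by simp
lemma entry01 (p q r s : ZMod ℓ) : (!![p,q;r,s] : Matrix (Fin 2) (Fin 2) (ZMod ℓ)) 0 1 = q := by simp
lemma entry10 (p q r s : ZMod ℓ) : (!![p,q;r,s] : Matrix (Fin 2) (Fin 2) (ZMod ℓ)) 1 0 = r := by simp
lemma entry11 (p q r s : ZMod ℓ) : (!![p,q;r,s] : Matrix (Fin 2) (Fin 2) (ZMod ℓ)) 1 1 = s := by simp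
end Helpers


/-- Proposition 2: for a prime `ℓ ≡ 3 (mod 4)` with `ℓ > 3` and `α` a generator of `𝔽_ℓ^×`,
the set of matrices `diag(α^i, α^j)` and `antidiag(α^i, α^j)` with `i ≡ j (mod 2)` is a
subgroup `G` of `GL₂(𝔽_ℓ)` whose determinant map to `𝔽_ℓ^×` is surjective, in which every
element fixes at least 2 lines of `𝔽_ℓ²`, but which fixes no line. -/
theorem stmt14 (ℓ : ℕ) [Fact (Nat.Prime ℓ)] (hl : 3 < ℓ) (hmod : ℓ % 4 = 3)
    (α : (ZMod ℓ)ˣ) (hα : ∀ x : (ZMod ℓ)ˣ, x ∈ Subgroup.zpowers α) :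
    ∃ G : Subgroup (GL2 ℓ),
      ((G : Set (GL2 ℓ)) = {g : GL2 ℓ | ∃ i j : ℤ, i % 2 = j % 2 ∧
        ((g : Matrix (Fin 2) (Fin 2) (ZMod ℓ)) = !![((α ^ i : (ZMod ℓ)ˣ) : ZMod ℓ), 0; 0, ((α ^ j : (ZMod ℓ)ˣ) : ZMod ℓ)] ∨
         (g : Matrix (Fin 2) (Fin 2) (ZMod ℓ)) = !![0, ((α ^ i : (ZMod ℓ)ˣ) : ZMod ℓ); ((α ^ j : (ZMod ℓ)ˣ) : ZMod ℓ), 0])}) ∧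
      (∀ d : (ZMod ℓ)ˣ, ∃ g ∈ G, ((g : Matrix (Fin 2) (Fin 2) (ZMod ℓ))).det = (d : ZMod ℓ)) ∧
      (∀ g ∈ G, 2 ≤ Nat.card {W : Line ℓ // g • W = W}) ∧
      ¬ ∃ W : Line ℓ, ∀ g ∈ G, g • W = W := by
  have hval : ∀ p q : ℤ, ((α ^ p : (ZMod ℓ)ˣ) : ZMod ℓ) * ((α ^ q : (ZMod ℓ)ˣ) : ZMod ℓ)
      = ((α ^ (p + q) : (ZMod ℓ)ˣ) : ZMod ℓ) := fun p q => by
    rw [← Units.val_mul]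
    exact congrArg Units.val (_root_.zpow_add α p q).symm
  set S : Set (GL2 ℓ) := {g : GL2 ℓ | ∃ i j : ℤ, i % 2 = j % 2 ∧
        ((g : Matrix (Fin 2) (Fin 2) (ZMod ℓ)) = !![((α ^ i : (ZMod ℓ)ˣ) : ZMod ℓ), 0; 0, ((α ^ j : (ZMod ℓ)ˣ) : ZMod ℓ)] ∨
         (g : Matrix (Fin 2) (Fin 2) (ZMod ℓ)) = !![0, ((α ^ i : (ZMod ℓ)ˣ) : ZMod ℓ); ((α ^ j : (ZMod ℓ)ˣ) : ZMod ℓ), 0])} with hS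
  have honeS : (1 : GL2 ℓ) ∈ S := by
    refine ⟨0, 0, rfl, Or.inl ?_⟩
    simp only [zpow_zero, Units.val_one, Matrix.one_fin_two]
  have hmulS : ∀ a b : GL2 ℓ, a ∈ S → b ∈ S → a * b ∈ S := by
    rintro a b ⟨i, j, hij, hd | hd⟩ ⟨i', j', hij', he | he⟩
    · refine ⟨i + i', j + j', by omega, Or.inl ?_⟩
      rw [Units.val_mul, hd, he, Matrix.mul_fin_two]
      simp only [mul_zero, zero_mul, add_zero, zero_add, hval]
    · refine ⟨i + i', j + j', by omega, Or.inr ?_⟩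
      rw [Units.val_mul, hd, he, Matrix.mul_fin_two]
      simp only [mul_zero, zero_mul, add_zero, zero_add, hval]
    · refine ⟨i + j', j + i', by omega, Or.inr ?_⟩
      rw [Units.val_mul, hd, he, Matrix.mul_fin_two]
      simp only [mul_zero, zero_mul, add_zero, zero_add, hval]
    · refine ⟨i + j', j + i', by omega, Or.inl ?_⟩
      rw [Units.val_mul, hd, he, Matrix.mul_fin_two]
      simp only [mul_zero, zero_mul, add_zero, zero_add, hval]
  have hinvS : ∀ a : GL2 ℓ, a ∈ S → a⁻¹ ∈ S := by
    rintro a ⟨i, j, hij, hd | hd⟩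
    · refine ⟨-i, -j, by omega, Or.inl ?_⟩
      rw [Matrix.coe_units_inv, hd]
      apply Matrix.inv_eq_right_inv
      rw [Matrix.mul_fin_two, Matrix.one_fin_two]
      simp only [mul_zero, zero_mul, add_zero, zero_add, hval]
      rw [add_neg_cancel, add_neg_cancel, zpow_zero, Units.val_one]
    · refine ⟨-j, -i, by omega, Or.inr ?_⟩
      rw [Matrix.coe_units_inv, hd]
      apply Matrix.inv_eq_right_inv
      rw [Matrix.mul_fin_two, Matrix.one_fin_two]
      simp only [mul_zero, zero_mul, add_zero, zero_add, hval]
      rw [add_neg_cancel, add_neg_cancel, zpow_zero, Units.val_one]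
  let G : Subgroup (GL2 ℓ) :=
    { carrier := S, one_mem' := honeS, mul_mem' := fun ha hb => hmulS _ _ ha hb,
      inv_mem' := fun ha => hinvS _ ha }
  have hGmem : ∀ g : GL2 ℓ, g ∈ G ↔ g ∈ S := fun g => Iff.rfl
  refine ⟨G, rfl, ?_, ?_, ?_⟩
  · -- determinant surjectivity
    intro d
    obtain ⟨n, hn⟩ := Subgroup.mem_zpowers_iff.mp (hα d)
    rcases Int.even_or_odd n with ⟨m, hm⟩ | ⟨m, hm⟩
    · refine ⟨diagGL (α ^ m) (α ^ m), (hGmem _).mpr ⟨m, m, rfl, Or.inl rfl⟩, ?_⟩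
      rw [diagGL_coe, Matrix.det_fin_two_of, hval m m, zero_mul, sub_zero, ← hm, hn]
    · obtain ⟨s, hs⟩ : ∃ s : ℤ, n = (((ℓ - 1) / 2 : ℕ) : ℤ) + 2 * s := by
        refine ⟨(n - (((ℓ - 1) / 2 : ℕ) : ℤ)) / 2, ?_⟩
        omega
      refine ⟨adiagGL (α ^ s) (α ^ s), (hGmem _).mpr ⟨s, s, rfl, Or.inr rfl⟩, ?_⟩
      have hsplit : α ^ ((((ℓ - 1) / 2 : ℕ) : ℤ) + 2 * s) = -(α ^ s * α ^ s) := by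
        rw [_root_.zpow_add, _root_.zpow_natCast, pow_half_eq_neg_one hl hmod α hα,
          neg_one_mul, two_mul, _root_.zpow_add]
      rw [adiagGL_coe, Matrix.det_fin_two_of, hval s s, zero_mul, zero_sub, ← Units.val_neg]
      congr 1
      rw [← hn, hs, hsplit, _root_.zpow_add]
  · -- every element fixes at least two lines
    rintro g hg
    obtain ⟨i, j, hij, hd | hd⟩ := (hGmem g).mp hg
    · have hv0 : (![1, 0] : Fin 2 → ZMod ℓ) ≠ 0 := by
        intro h
        simpa using congrFun h 0
      have hv1 : (![0, 1] : Fin 2 → ZMod ℓ) ≠ 0 := by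
        intro h
        simpa using congrFun h 1
      have fix0 : g • lineOf ![1, 0] hv0 = lineOf ![1, 0] hv0 := by
        refine fixes_of_eigen g hv0 (Units.ne_zero (α ^ i)) ?_
        rw [hd]
        refine funext_fin2 ?_ ?_
        · rw [mulVec_apply_zero]
          simp
        · rw [mulVec_apply_one]
          simp
      have fix1 : g • lineOf ![0, 1] hv1 = lineOf ![0, 1] hv1 := by
        refine fixes_of_eigen g hv1 (Units.ne_zero (α ^ j)) ?_
        rw [hd]
        refine funext_fin2 ?_ ?_
        · rw [mulVec_apply_zero]
          simp
        · rw [mulVec_apply_one]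
          simp
      refine two_le_card_fixed fix0 fix1 (lineOf_ne hv0 hv1 ?_)
      rw [Submodule.mem_span_singleton]
      rintro ⟨c, hc⟩
      simpa using congrFun hc 1
    · obtain ⟨s, hs⟩ : ∃ s : ℤ, i + j = s + s := ⟨(i + j) / 2, by omega⟩
      set a : ZMod ℓ := ((α ^ i : (ZMod ℓ)ˣ) : ZMod ℓ) with ha
      set b : ZMod ℓ := ((α ^ j : (ZMod ℓ)ˣ) : ZMod ℓ) with hb
      set lam : ZMod ℓ := ((α ^ s : (ZMod ℓ)ˣ) : ZMod ℓ) with hlam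
      have ha0 : a ≠ 0 := Units.ne_zero _
      have hlam0 : lam ≠ 0 := Units.ne_zero _
      have hba : b * a = lam * lam := by
        rw [ha, hb, hlam, hval j i, hval s s]
        congr 2
        omega
      have h2 : (2 : ZMod ℓ) ≠ 0 := by
        intro h
        have h2' : ((2 : ℕ) : ZMod ℓ) = 0 := by exact_mod_cast h
        rw [ZMod.natCast_eq_zero_iff] at h2'
        have := Nat.le_of_dvd (by norm_num) h2'
        omega
      have hvp : (![a, lam] : Fin 2 → ZMod ℓ) ≠ 0 := by
        intro h
        exact ha0 (by simpa using congrFun h 0)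
      have hvm : (![a, -lam] : Fin 2 → ZMod ℓ) ≠ 0 := by
        intro h
        exact ha0 (by simpa using congrFun h 0)
      have fixp : g • lineOf ![a, lam] hvp = lineOf ![a, lam] hvp := by
        refine fixes_of_eigen g hvp hlam0 ?_
        rw [hd]
        refine funext_fin2 ?_ ?_
        · rw [mulVec_apply_zero]
          simp [mul_comm]
        · rw [mulVec_apply_one, entry10, entry11]
          simp only [Pi.smul_apply, smul_eq_mul, Matrix.cons_val_one, Matrix.head_cons,
            Matrix.cons_val_zero]
          linear_combination hba
      have fixm : g • lineOf ![a, -lam] hvm = lineOf ![a, -lam] hvm := by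
        refine fixes_of_eigen g hvm (neg_ne_zero.mpr hlam0) ?_
        rw [hd]
        refine funext_fin2 ?_ ?_
        · rw [mulVec_apply_zero]
          simp [mul_comm]
        · rw [mulVec_apply_one, entry10, entry11]
          simp only [Pi.smul_apply, smul_eq_mul, Matrix.cons_val_one, Matrix.head_cons,
            Matrix.cons_val_zero]
          linear_combination hba
      refine two_le_card_fixed fixp fixm (lineOf_ne hvp hvm ?_)
      rw [Submodule.mem_span_singleton]
      rintro ⟨c, hc⟩
      have h0 := congrFun hc 0
      have h1 := congrFun hc 1
      simp only [Pi.smul_apply, smul_eq_mul, Matrix.cons_val_zero, Matrix.cons_val_one,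
        Matrix.head_cons] at h0 h1
      have hc1 : c = 1 := mul_right_cancel₀ ha0 (h0.trans (one_mul a).symm)
      rw [hc1, one_mul] at h1
      have hll : lam + lam = 0 := by linear_combination h1
      rw [← two_mul] at hll
      rcases mul_eq_zero.mp hll with h | h
      · exact h2 h
      · exact hlam0 h
  · -- no common fixed line
    rintro ⟨W, hW⟩
    have hWbot : W.1 ≠ ⊥ := by
      intro h
      have h2 := W.2
      rw [h, finrank_bot] at h2
      omega
    obtain ⟨v, hvW, hv⟩ := Submodule.exists_mem_ne_zero_of_ne_bot hWbot
    have hspan : Submodule.span (ZMod ℓ) {v} = W.1 := by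
      refine Submodule.eq_of_le_of_finrank_le
        ((Submodule.span_singleton_le_iff_mem v W.1).mpr hvW) (le_of_eq ?_)
      rw [W.2, finrank_span_singleton hv]
    have key : ∀ g : GL2 ℓ, g ∈ S →
        ∃ c : ZMod ℓ, c • v = (g : Matrix (Fin 2) (Fin 2) (ZMod ℓ)).mulVec v := by
      intro g hg
      have h1 : (g • W).1 = W.1 := congrArg Subtype.val (hW g ((hGmem g).mpr hg))
      rw [smul_line_coe] at h1
      have h2 : (g : Matrix (Fin 2) (Fin 2) (ZMod ℓ)).mulVecLin v ∈ W.1 :=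
        h1 ▸ Submodule.mem_map_of_mem hvW
      rw [← hspan, Submodule.mem_span_singleton] at h2
      obtain ⟨c, hc⟩ := h2
      exact ⟨c, hc.trans (Matrix.mulVecLin_apply _ _)⟩
    have hg1 : diagGL (α ^ (0 : ℤ)) (α ^ (2 : ℤ)) ∈ S := ⟨0, 2, by decide, Or.inl rfl⟩
    have hg2 : adiagGL (α ^ (0 : ℤ)) (α ^ (0 : ℤ)) ∈ S := ⟨0, 0, rfl, Or.inr rfl⟩
    obtain ⟨c, hc⟩ := key _ hg1
    obtain ⟨e, he⟩ := key _ hg2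
    rw [diagGL_coe] at hc
    rw [adiagGL_coe] at he
    have hc0 := congrFun hc 0
    have hc1 := congrFun hc 1
    have he0 := congrFun he 0
    have he1 := congrFun he 1
    rw [mulVec_apply_zero, entry00, entry01] at hc0 he0
    rw [mulVec_apply_one, entry10, entry11] at hc1 he1
    simp only [Pi.smul_apply, smul_eq_mul, zpow_zero, Units.val_one, one_mul, zero_mul,
      mul_zero, add_zero, zero_add] at hc0 hc1 he0 he1
    have hα2 : ((α ^ (2 : ℤ) : (ZMod ℓ)ˣ) : ZMod ℓ) ≠ 1 := by
      intro h
      have hu : α ^ (2 : ℤ) = 1 := Units.ext (by rw [h, Units.val_one])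
      have hu' : α ^ (2 : ℕ) = 1 := by rw [← zpow_natCast]; exact_mod_cast hu
      have hdd := orderOf_dvd_of_pow_eq_one hu'
      rw [orderOf_gen α hα] at hdd
      have := Nat.le_of_dvd (by norm_num) hdd
      omega
    by_cases hx : v 0 = 0
    · rw [hx, mul_zero] at he0
      apply hv
      refine funext_fin2 ?_ ?_
      · simpa using hx
      · simpa using he0.symm
    · have hcv : c = 1 := mul_right_cancel₀ hx (hc0.trans (one_mul (v 0)).symm)
      rw [hcv, one_mul] at hc1
      have hy : v 1 = 0 := by
        by_contra hy
        exact hα2 (mul_right_cancel₀ hy ((one_mul (v 1)).trans hc1).symm)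
      rw [hy, mul_zero] at he1
      exact hx he1.symm
end

section
/- Let ℓ > 2 be prime, let H be a dihedral subgroup of PGL₂(𝔽_ℓ) of order 2n with n even, acting on the set Ω of lines in 𝔽_ℓ², and suppose every nontrivial element of H fixes exactly 2 lines. Then no homomorphism χ : H → {±1} satisfying χ(h) = (−1)^{number of h-orbits on Ω} can be surjective. -/
open Matrix MulAction

variable (ℓ : ℕ) [Fact (Nat.Prime ℓ)]

variable {ℓ}

/-! A nontrivial involution of `PGL₂(𝔽_ℓ)` fixing exactly two of the `N` lines pairs up the
others, so it has `(N + 2) / 2` orbits, and `χ` takes one and the same value on all involutions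
of `H`. For `n` even, `H ≅ D_n` has at least `n + 1` involutions (the central rotation and the
`n` reflections), while every fibre of a surjective `χ : H → {±1}` has only `n` elements. -/

theorem MulAction.sum_div_card_orbit {G α : Type*} [Group G] [MulAction G α] [Fintype α]
    {m : ℕ} (hm : ∀ a : α, Nat.card (orbit G a) ∣ m) :
    ∑ a : α, m / Nat.card (orbit G a) = m * Nat.card (orbitRel.Quotient G α) := by
  classical
  have : Fintype (orbitRel.Quotient G α) := Fintype.ofFinite _
  rw [← Finset.sum_fiberwise Finset.univ (Quotient.mk'' : α → orbitRel.Quotient G α),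
    Nat.card_eq_fintype_card, mul_comm, ← smul_eq_mul, ← Finset.card_univ, ← Finset.sum_const]
  -- each orbit `O` contributes `#O * (m / #O) = m`
  refine Finset.sum_congr rfl fun ω _ => ?_
  induction ω using Quotient.inductionOn' with | h a => ?_
  set fiber := Finset.univ.filter
    fun b : α => (Quotient.mk'' b : orbitRel.Quotient G α) = Quotient.mk'' a
  have hmem (b : α) : b ∈ fiber ↔ b ∈ orbit G a := by
    simpa [fiber] using Quotient.eq''.trans orbitRel_apply
  have hcard : fiber.card = Nat.card (orbit G a) := by
    rw [Nat.card_eq_card_toFinset]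
    congr 1
    ext b
    simp [hmem]
  rw [Finset.sum_congr rfl fun b hb => by rw [orbit_eq_iff.mpr ((hmem b).mp hb)],
    Finset.sum_const, hcard, smul_eq_mul, Nat.mul_div_cancel' (hm a)]

section
variable {G α : Type*} [Group G] [MulAction G α] {g : G}

open Pointwise in
theorem MulAction.orbit_zpowers_eq_pair (hg : ∀ a : α, g • g • a = a) (a : α) :
    orbit (Subgroup.zpowers g) a = {a, g • a} := by
  have hstab : g ∈ stabilizer G ({a, g • a} : Set α) := mem_stabilizer_set.mpr fun b => by
    simp only [Set.mem_insert_iff, Set.mem_singleton_iff, smul_left_cancel_iff]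
    constructor
    · rintro (h | h) <;> [exact .inr (by rw [← h, hg]); exact .inl h]
    · rintro (rfl | rfl) <;> [exact .inr rfl; exact .inl (hg a)]
  refine Set.Subset.antisymm ?_ (Set.pair_subset (mem_orbit_self a)
    (mem_orbit a (⟨g, Subgroup.mem_zpowers g⟩ : Subgroup.zpowers g)))
  rintro _ ⟨⟨h, hh⟩, rfl⟩
  exact mem_stabilizer_set.mp ((Subgroup.zpowers_le.mpr hstab) hh) a |>.mpr (Set.mem_insert a _)

theorem MulAction.two_mul_card_orbitRel_zpowers [Finite α] (hg : ∀ a : α, g • g • a = a) :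
    2 * Nat.card (orbitRel.Quotient (Subgroup.zpowers g) α) =
      Nat.card α + Nat.card {a : α // g • a = a} := by
  classical
  have := Fintype.ofFinite α
  have hcard (a : α) : Nat.card (orbit (Subgroup.zpowers g) a) = if g • a = a then 1 else 2 := by
    rw [orbit_zpowers_eq_pair hg, Nat.card_coe_set_eq]
    split_ifs with h
    · rw [h, Set.pair_eq_singleton, Set.ncard_singleton]
    · exact Set.ncard_pair (Ne.symm h)
  have hdvd (a : α) : Nat.card (orbit (Subgroup.zpowers g) a) ∣ 2 := by
    rw [hcard]; split_ifs <;> norm_num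
  have hdiv (a : α) :
      2 / Nat.card (orbit (Subgroup.zpowers g) a) = 1 + if g • a = a then 1 else 0 := by
    rw [hcard]; split_ifs <;> rfl
  rw [← sum_div_card_orbit hdvd, Finset.sum_congr rfl fun a _ => hdiv a, Finset.sum_add_distrib,
    Finset.sum_boole]
  simp [Nat.card_eq_fintype_card, Fintype.card_subtype]

end

theorem smul_line_of_mem_center {z : GL2 ℓ} (hz : z ∈ Subgroup.center (GL2 ℓ))
    (W : Line ℓ) : z • W = W := by
  rw [GeneralLinearGroup.center_eq_range_scalar] at hz
  obtain ⟨c, rfl⟩ := hz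
  have hmul : mulVecLin (GeneralLinearGroup.scalar (Fin 2) c : Matrix (Fin 2) (Fin 2) (ZMod ℓ)) =
      (c : ZMod ℓ) • LinearMap.id := by
    ext v i
    simp [Pi.single_apply]
  apply Subtype.ext
  change W.1.map (mulVecLin _) = W.1
  rw [hmul, Submodule.map_smul _ _ _ c.ne_zero, Submodule.map_id]

theorem smul_smul_line_of_sq_eq_one {g : GL2 ℓ} (hg : (g : PGL2 ℓ) ^ 2 = 1) (W : Line ℓ) :
    g • g • W = W := by
  rw [← mul_smul]
  refine smul_line_of_mem_center ?_ W
  rwa [← QuotientGroup.eq_one_iff, ← sq, QuotientGroup.mk_pow]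

theorem MonoidHom.two_mul_card_fiber_of_surjective {G : Type*} [Group G] [Finite G]
    {χ : G →* ℤˣ} (hχ : Function.Surjective χ) (c : ℤˣ) :
    2 * Nat.card (χ ⁻¹' {c}) = Nat.card G := by
  rw [Nat.card_congr (χ.fiberEquivKerOfSurjective hχ c), ← χ.ker.card_mul_index,
    Subgroup.index_ker, MonoidHom.range_eq_top.mpr hχ, Subgroup.card_top]
  simp [mul_comm]

theorem DihedralGroup.succ_le_card_orderOf_eq_two {n : ℕ} [NeZero n] (hn : Even n) :
    n + 1 ≤ Nat.card {x : DihedralGroup n // orderOf x = 2} := by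
  obtain ⟨m, rfl⟩ := hn
  have hm : 0 < m := by have := NeZero.ne (m + m); omega
  have hr : orderOf (r (m : ZMod (m + m))) = 2 := by
    refine orderOf_eq_prime ?_ ?_
    · rw [sq, r_mul_r, ← Nat.cast_add, ZMod.natCast_self, r_zero]
    · rw [← r_zero, Ne, r.injEq, ZMod.natCast_eq_zero_iff]
      exact fun h => by have := Nat.le_of_dvd hm h; omega
  let f : Option (ZMod (m + m)) → {x : DihedralGroup (m + m) // orderOf x = 2} :=
    fun o => o.elim ⟨r m, hr⟩ fun i => ⟨sr i, orderOf_sr i⟩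
  have hf : Function.Injective f := by
    rintro (_ | i) (_ | j) h <;> simp_all [f]
  simpa [Nat.card_zmod] using Nat.card_le_card_of_injective f hf

theorem MonoidHom.not_surjective_of_forall_orderOf_eq_two {G : Type*} [Group G] [Finite G]
    (χ : G →* ℤˣ) (c : ℤˣ) (hc : ∀ g : G, orderOf g = 2 → χ g = c)
    (hcard : Nat.card G < 2 * Nat.card {g : G // orderOf g = 2}) : ¬ Function.Surjective χ := by
  intro hχ
  have hfiber := two_mul_card_fiber_of_surjective hχ c
  have hle : Nat.card {g : G // orderOf g = 2} ≤ Nat.card (χ ⁻¹' {c}) :=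
    Nat.card_mono (Set.toFinite _) fun g hg => hc g hg
  omega

theorem stmt18_general (ℓ n : ℕ) [Fact (Nat.Prime ℓ)] (hn : Even n)
    (H : Subgroup (PGL2 ℓ)) (hdih : Nonempty (↥H ≃* DihedralGroup n))
    (hfix : ∀ h ∈ H, h ≠ 1 → ∀ g : GL2 ℓ, (g : PGL2 ℓ) = h →
      Nat.card {W : Line ℓ // g • W = W} = 2) :
    ∀ χ : ↥H →* ℤˣ,
      (∀ (h : ↥H) (g : GL2 ℓ), (g : PGL2 ℓ) = (h : PGL2 ℓ) →
        χ h = (-1 : ℤˣ) ^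
          Nat.card (MulAction.orbitRel.Quotient (Subgroup.zpowers g) (Line ℓ))) →
      ¬ Function.Surjective χ := by
  intro χ hχ
  obtain ⟨e⟩ := hdih
  have hcardH : Nat.card H = 2 * n := (Nat.card_congr e.toEquiv).trans DihedralGroup.nat_card
  have : NeZero n := ⟨by rintro rfl; exact Nat.card_pos.ne' hcardH⟩
  have hinv : n + 1 ≤ Nat.card {h : H // orderOf h = 2} := by
    rw [Nat.card_congr (e.toEquiv.subtypeEquiv (q := fun x => orderOf x = 2)
      fun h => by rw [← e.orderOf_eq h]; rfl)]
    exact DihedralGroup.succ_le_card_orderOf_eq_two hn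
  refine χ.not_surjective_of_forall_orderOf_eq_two ((-1) ^ ((Nat.card (Line ℓ) + 2) / 2))
    (fun h h2 => ?_) (by omega)
  obtain ⟨g, hg⟩ := QuotientGroup.mk_surjective (h : PGL2 ℓ)
  have hsq : (g : PGL2 ℓ) ^ 2 = 1 := by
    have : h ^ 2 = 1 := orderOf_dvd_iff_pow_eq_one.mp (by rw [h2])
    rw [hg, ← Subgroup.coe_pow, this, Subgroup.coe_one]
  have hne : (h : PGL2 ℓ) ≠ 1 := by
    rw [Ne, OneMemClass.coe_eq_one, ← orderOf_eq_one_iff, h2]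
    decide
  have horbits := two_mul_card_orbitRel_zpowers (smul_smul_line_of_sq_eq_one hsq)
  rw [hfix h h.2 hne g hg] at horbits
  rw [hχ h g hg]
  congr 1
  omega

/-- Let `ℓ > 2` be prime and `H` a dihedral subgroup of `PGL₂(𝔽_ℓ)` of order `2n` with `n`
even such that every nontrivial element of `H` fixes exactly 2 lines (fixed lines and orbits
of `h ∈ PGL₂(𝔽_ℓ)` are computed via any lift `g ∈ GL₂(𝔽_ℓ)`, which induces the same
permutation of lines).  Then no homomorphism `χ : H → {±1}` with
`χ(h) = (-1)^(number of h-orbits on lines)` is surjective. -/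
theorem stmt18 (ℓ n : ℕ) [Fact (Nat.Prime ℓ)] (hl : 2 < ℓ) (hn : Even n)
    (H : Subgroup (PGL2 ℓ)) (hdih : Nonempty (↥H ≃* DihedralGroup n))
    (hfix : ∀ h ∈ H, h ≠ 1 → ∀ g : GL2 ℓ, (g : PGL2 ℓ) = h →
      Nat.card {W : Line ℓ // g • W = W} = 2) :
    ∀ χ : ↥H →* ℤˣ,
      (∀ (h : ↥H) (g : GL2 ℓ), (g : PGL2 ℓ) = (h : PGL2 ℓ) →
        χ h = (-1 : ℤˣ) ^
          Nat.card (MulAction.orbitRel.Quotient (Subgroup.zpowers g) (Line ℓ))) →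
      ¬ Function.Surjective χ :=
  stmt18_general ℓ n hn H hdih hfix
end

section
/- Let ℓ be an odd prime and let G be a subgroup of GL₂(𝔽_ℓ) acting on the set Ω of lines of 𝔽_ℓ² with no global fixed line, such that the image H of G in PGL₂(𝔽_ℓ) is dihedral of order 2n with n an odd divisor of (ℓ−1)/2 and n > 1, and such that every nontrivial element of the cyclic subgroup of order n of H fixes exactly 2 lines. Then every G-orbit on Ω either has size 2 or has size divisible by n, and since n does not divide ℓ+1, at least one orbit has size exactly 2. -/
open Matrix MulAction

variable (ℓ : ℕ) [Fact (Nat.Prime ℓ)]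

variable {ℓ}

-- center is scalar
theorem center_scalar (z : GL2 ℓ) (hz : z ∈ Subgroup.center (GL2 ℓ)) :
    ∃ c : ZMod ℓ, c ≠ 0 ∧ (z : Matrix (Fin 2) (Fin 2) (ZMod ℓ)) = c • 1 := by
  have hcomm := Subgroup.mem_center_iff.mp hz
  set M : Matrix (Fin 2) (Fin 2) (ZMod ℓ) := (z : Matrix (Fin 2) (Fin 2) (ZMod ℓ)) with hM
  have hT1 : IsUnit (!![1, 1; 0, 1] : Matrix (Fin 2) (Fin 2) (ZMod ℓ)) := by
    apply (Matrix.isUnit_iff_isUnit_det _).mpr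
    simp [Matrix.det_fin_two]
  have hT2 : IsUnit (!![1, 0; 1, 1] : Matrix (Fin 2) (Fin 2) (ZMod ℓ)) := by
    apply (Matrix.isUnit_iff_isUnit_det _).mpr
    simp [Matrix.det_fin_two]
  obtain ⟨u1, hu1⟩ := hT1
  obtain ⟨u2, hu2⟩ := hT2
  have h1 : !![1, 1; 0, 1] * M = M * !![1, 1; 0, 1] := by
    have := congrArg Units.val (hcomm u1)
    simpa [hu1, hM] using this
  have h2 : !![1, 0; 1, 1] * M = M * !![1, 0; 1, 1] := by
    have := congrArg Units.val (hcomm u2)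
    simpa [hu2, hM] using this
  rw [Matrix.eta_fin_two M, Matrix.mul_fin_two, Matrix.mul_fin_two] at h1 h2
  have e1 := congrFun (congrFun h1 0) 0
  have e2 := congrFun (congrFun h1 0) 1
  have e3 := congrFun (congrFun h2 0) 0
  simp at e1 e2 e3
  refine ⟨M 0 0, ?_, ?_⟩
  · intro h0
    have hdet : IsUnit M.det := by
      rw [← Matrix.isUnit_iff_isUnit_det]
      exact ⟨z, rfl⟩
    rw [Matrix.det_fin_two] at hdet
    have : M 1 0 = 0 := e1
    rw [h0, this] at hdet
    simp at hdet
  · rw [Matrix.eta_fin_two M]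
    have ha : M 1 0 = 0 := e1
    have hb : M 0 1 = 0 := e3
    have hc : M 1 1 = M 0 0 := by linear_combination e2
    ext i j
    fin_cases i <;> fin_cases j <;> simp [ha, hb, hc, Matrix.one_apply]


theorem center_smul (z : GL2 ℓ) (hz : z ∈ Subgroup.center (GL2 ℓ)) (W : Line ℓ) : z • W = W := by
  obtain ⟨c, hc0, hc⟩ := center_scalar z hz
  apply Subtype.ext
  show Submodule.map (Matrix.mulVecLin (z : Matrix (Fin 2) (Fin 2) (ZMod ℓ))) W.1 = W.1
  rw [hc]
  ext x
  simp only [Submodule.mem_map, Matrix.mulVecLin_apply]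
  constructor
  · rintro ⟨y, hy, rfl⟩
    rw [Matrix.smul_mulVec, Matrix.one_mulVec]
    exact W.1.smul_mem c hy
  · intro hx
    refine ⟨c⁻¹ • x, W.1.smul_mem _ hx, ?_⟩
    rw [Matrix.smul_mulVec, Matrix.one_mulVec, smul_inv_smul₀ hc0]

theorem smul_eq_of_pgl_eq {a b : GL2 ℓ}
    (h : (QuotientGroup.mk a : PGL2 ℓ) = QuotientGroup.mk b) (W : Line ℓ) :
    a • W = b • W := by
  have hz : a⁻¹ * b ∈ Subgroup.center (GL2 ℓ) := QuotientGroup.eq.mp h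
  calc a • W = a • ((a⁻¹ * b) • W) := by rw [center_smul _ hz]
  _ = b • W := by rw [← mul_smul, mul_inv_cancel_left]

theorem smul_pow_fix {x : GL2 ℓ} {W : Line ℓ} (h : x • W = W) (m : ℕ) : x ^ m • W = W := by
  induction m with
  | zero => simp
  | succ k ih => rw [pow_succ, mul_smul, h, ih]

example (g : GL2 ℓ) : (g : PGL2 ℓ) = QuotientGroup.mk g := rfl


/-- Let `ℓ` be an odd prime and `G ⊆ GL₂(𝔽_ℓ)` a subgroup with no global fixed line whose
image `H` in `PGL₂(𝔽_ℓ)` is dihedral of order `2n`, with `n > 1` an odd divisor of `(ℓ-1)/2`,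
such that every nontrivial element of the cyclic subgroup of order `n` of `H` (i.e. every
nontrivial image of an element of `G` whose order divides `n`) fixes exactly 2 lines.  Then
every `G`-orbit on the lines has size 2 or size divisible by `n`, and since `n ∤ ℓ + 1`, at
least one orbit has size exactly 2. -/
theorem stmt19 (ℓ n : ℕ) [Fact (Nat.Prime ℓ)] (hodd : Odd ℓ) (G : Subgroup (GL2 ℓ))
    (hglob : ¬ ∃ W : Line ℓ, ∀ g ∈ G, g • W = W)
    (hn1 : 1 < n) (hnodd : Odd n) (hdiv : n ∣ (ℓ - 1) / 2)
    (hdih : Nonempty (↥(pglImage G) ≃* DihedralGroup n))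
    (hfix : ∀ g ∈ G, (g : PGL2 ℓ) ≠ 1 → orderOf ((g : PGL2 ℓ)) ∣ n →
      Nat.card {W : Line ℓ // g • W = W} = 2) :
    (∀ W : Line ℓ, Nat.card (MulAction.orbit G W) = 2 ∨
      n ∣ Nat.card (MulAction.orbit G W)) ∧
    (¬ n ∣ ℓ + 1) ∧
    (∃ W : Line ℓ, Nat.card (MulAction.orbit G W) = 2) := by
  obtain ⟨e⟩ := hdih
  haveI : NeZero n := ⟨by omega⟩
  have hprime : ℓ.Prime := Fact.out
  obtain ⟨k, hk⟩ := hodd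
  have hℓ1 : 1 ≤ ℓ := hprime.one_lt.le
  have hnℓ : n ∣ ℓ - 1 := by
    have h2 : (ℓ - 1) / 2 = k := by omega
    rw [h2] at hdiv
    have h3 : ℓ - 1 = 2 * k := by omega
    rw [h3]
    exact hdiv.mul_left 2
  have hpart2 : ¬ n ∣ ℓ + 1 := by
    intro hcon
    have h2 : n ∣ 2 := by
      have h := Nat.dvd_sub hcon hnℓ
      have h3 : ℓ + 1 - (ℓ - 1) = 2 := by omega
      rwa [h3] at h
    have hle := Nat.le_of_dvd (by norm_num) h2
    have hn2 : n = 2 := by omega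
    rw [hn2] at hnodd
    exact (by decide : ¬ Odd 2) hnodd
  have hcardH : Nat.card ↥(pglImage G) = 2 * n := by
    rw [Nat.card_congr e.toEquiv, DihedralGroup.nat_card]
  -- the chosen rotation g
  have hmemr : ((e.symm (DihedralGroup.r 1) : ↥(pglImage G)) : PGL2 ℓ) ∈ pglImage G :=
    (e.symm (DihedralGroup.r 1)).2
  obtain ⟨g, hgG, hgφ⟩ := Subgroup.mem_map.mp hmemr
  have hgφ' : (g : PGL2 ℓ) = ((e.symm (DihedralGroup.r 1) : ↥(pglImage G)) : PGL2 ℓ) := hgφ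
  have hordg : orderOf (g : PGL2 ℓ) = n := by
    have hA : orderOf ((e.symm (DihedralGroup.r 1) : ↥(pglImage G)) : PGL2 ℓ)
        = orderOf (e.symm (DihedralGroup.r (1 : ZMod n))) := Subgroup.orderOf_coe _
    have hB : orderOf (e.symm (DihedralGroup.r (1 : ZMod n)))
        = orderOf (DihedralGroup.r (1 : ZMod n)) :=
      orderOf_injective e.symm.toMonoidHom e.symm.injective _
    rw [hgφ', hA, hB]
    exact DihedralGroup.orderOf_r_one
  have hg1 : (g : PGL2 ℓ) ≠ 1 := by
    intro h
    rw [h, orderOf_one] at hordg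
    omega
  set Fg : Set (Line ℓ) := {V : Line ℓ | g • V = V} with hFg
  have hFgcard : Fg.ncard = 2 := by
    rw [← Nat.card_coe_set_eq]
    exact hfix g hgG hg1 (by rw [hordg])
  -- every "rotation" has the same fixed set
  have star : ∀ x : GL2 ℓ, x ∈ G → (x : PGL2 ℓ) ≠ 1 → orderOf (x : PGL2 ℓ) ∣ n →
      {V : Line ℓ | x • V = V} = Fg := by
    intro x hxG hx1 hxn
    have hmem : (x : PGL2 ℓ) ∈ pglImage G := Subgroup.mem_map_of_mem _ hxG
    set u : ↥(pglImage G) := ⟨_, hmem⟩ with hu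
    have hordu : orderOf (e u) ∣ n := by
      have h6 : orderOf (e u) = orderOf u := orderOf_injective e.toMonoidHom e.injective u
      have h7 : orderOf ((u : ↥(pglImage G)) : PGL2 ℓ) = orderOf u := Subgroup.orderOf_coe u
      rw [h6, ← h7]
      exact hxn
    rcases hru : e u with i | i
    · -- rotation case
      have hx_eq : (x : PGL2 ℓ) = ((g : PGL2 ℓ)) ^ (i.val) := by
        have h1 : u = e.symm (DihedralGroup.r i) := by rw [← hru, MulEquiv.symm_apply_apply]
        have h2 : DihedralGroup.r i = (DihedralGroup.r (1 : ZMod n)) ^ (i.val) := by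
          rw [DihedralGroup.r_one_pow, ZMod.natCast_val, ZMod.cast_id]
        have h3 : u = (e.symm (DihedralGroup.r 1)) ^ i.val := by rw [h1, h2, map_pow]
        have h4 := congrArg Subtype.val h3
        rw [SubgroupClass.coe_pow, ← hgφ'] at h4
        exact h4
      have hact : ∀ V : Line ℓ, x • V = g ^ i.val • V := by
        intro V
        apply smul_eq_of_pgl_eq
        rw [show (QuotientGroup.mk x : PGL2 ℓ) = (x : PGL2 ℓ) from rfl, hx_eq]
        exact (map_pow (QuotientGroup.mk' (Subgroup.center (GL2 ℓ))) g i.val).symm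
      have hsub : Fg ⊆ {V : Line ℓ | x • V = V} := by
        intro V hV
        show x • V = V
        rw [hact V, smul_pow_fix hV]
      have hcx : {V : Line ℓ | x • V = V}.ncard = 2 := by
        rw [← Nat.card_coe_set_eq]
        exact hfix x hxG hx1 hxn
      exact (Set.eq_of_subset_of_ncard_le hsub (by rw [hcx, hFgcard]) (Set.toFinite _)).symm
    · -- reflection case : impossible
      exfalso
      rw [hru, DihedralGroup.orderOf_sr] at hordu
      rcases hnodd with ⟨m, hm⟩
      omega
  -- Case I
  have caseI : ∀ (W : Line ℓ) (x : GL2 ℓ), x ∈ G → (x : PGL2 ℓ) ≠ 1 →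
      orderOf (x : PGL2 ℓ) ∣ n → x • W = W → (MulAction.orbit G W).ncard = 2 := by
    intro W x hxG hx1 hxn hxW
    have hsub : MulAction.orbit G W ⊆ Fg := by
      rintro _ ⟨a, rfl⟩
      set c : GL2 ℓ := a.1 * x * a.1⁻¹ with hcdef
      have hcW : c • ((a : ↥G) • W) = (a : ↥G) • W := by
        show c • (a.1 • W) = a.1 • W
        rw [hcdef, ← mul_smul, inv_mul_cancel_right, mul_smul, hxW]
      have hcG : c ∈ G := mul_mem (mul_mem a.2 hxG) (inv_mem a.2)
      have hmk : (c : PGL2 ℓ) = (a.1 : PGL2 ℓ) * (x : PGL2 ℓ) * ((a.1 : PGL2 ℓ))⁻¹ := by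
        rw [hcdef]
        rw [QuotientGroup.mk_mul, QuotientGroup.mk_mul, QuotientGroup.mk_inv]
      have hc1 : (c : PGL2 ℓ) ≠ 1 := by
        rw [hmk]
        intro h
        exact hx1 (conj_eq_one_iff.mp h)
      have hcn : orderOf (c : PGL2 ℓ) ∣ n := by
        have h5 : (c : PGL2 ℓ) = (MulAut.conj ((a.1 : PGL2 ℓ))) (x : PGL2 ℓ) := by
          rw [hmk]; rfl
        rw [h5, show ((MulAut.conj ((a.1 : PGL2 ℓ))) (x : PGL2 ℓ)) =
          (MulAut.conj ((a.1 : PGL2 ℓ))).toMonoidHom (x : PGL2 ℓ) from rfl]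
        rw [orderOf_injective _ (MulAut.conj ((a.1 : PGL2 ℓ))).injective]
        exact hxn
      rw [← star c hcG hc1 hcn]
      exact hcW
    have h0 : W ∈ MulAction.orbit G W := MulAction.mem_orbit_self W
    have hle : (MulAction.orbit G W).ncard ≤ 2 :=
      le_trans (Set.ncard_le_ncard hsub (Set.toFinite _)) (le_of_eq hFgcard)
    have hpos : 0 < (MulAction.orbit G W).ncard := by
      rw [Set.ncard_pos (Set.toFinite _)]
      exact ⟨W, h0⟩
    have hne1 : (MulAction.orbit G W).ncard ≠ 1 := by
      intro h1
      obtain ⟨V, hV⟩ := Set.ncard_eq_one.mp h1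
      apply hglob
      refine ⟨W, fun b hb => ?_⟩
      have h2 : (⟨b, hb⟩ : ↥G) • W ∈ MulAction.orbit G W := MulAction.mem_orbit _ _
      rw [hV] at h2 h0
      simp only [Set.mem_singleton_iff] at h2 h0
      show (⟨b, hb⟩ : ↥G) • W = W
      rw [h2, ← h0]
    omega
  -- Case II
  have caseII : ∀ W : Line ℓ,
      (¬ ∃ x : GL2 ℓ, x ∈ G ∧ (x : PGL2 ℓ) ≠ 1 ∧ orderOf (x : PGL2 ℓ) ∣ n ∧ x • W = W) →
      n ∣ (MulAction.orbit G W).ncard := by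
    intro W hno
    set φq := QuotientGroup.mk' (Subgroup.center (GL2 ℓ)) with hφq
    set ψ : ↥G →* ↥(pglImage G) := φq.subgroupMap G with hψ
    have hψsurj : Function.Surjective ψ := φq.subgroupMap_surjective G
    set Stab := MulAction.stabilizer ↥G W with hStab
    have hker : ψ.ker ≤ Stab := by
      intro a ha
      have ha' : (a.1 : PGL2 ℓ) = 1 := congrArg Subtype.val (MonoidHom.mem_ker.mp ha)
      have hz : a.1 ∈ Subgroup.center (GL2 ℓ) := (QuotientGroup.eq_one_iff _).mp ha'
      show a • W = W
      exact center_smul a.1 hz W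
    set S := Stab.map ψ with hS
    have hindex : S.index = Stab.index := Subgroup.index_map_eq Stab hψsurj hker
    have hdS : Stab.index * Nat.card S = 2 * n := by
      rw [← hindex, Subgroup.index_mul_card, hcardH]
    have hrot : ∀ s : ↥(pglImage G), s ∈ S → s ≠ 1 → ∃ i : ZMod n, e s = DihedralGroup.sr i := by
      intro s hsS hs1
      rcases hr : e s with i | i
      · exfalso
        obtain ⟨a, haStab, rfl⟩ := Subgroup.mem_map.mp hsS
        apply hno
        have ha1 : (a.1 : PGL2 ℓ) ≠ 1 := by
          intro h
          apply hs1
          apply Subtype.ext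
          exact h
        have haord : orderOf (a.1 : PGL2 ℓ) ∣ n := by
          have h8 : orderOf ((ψ a : ↥(pglImage G)) : PGL2 ℓ) = orderOf (ψ a) :=
            Subgroup.orderOf_coe _
          have h9 : orderOf (e (ψ a)) = orderOf (ψ a) :=
            orderOf_injective e.toMonoidHom e.injective _
          show orderOf ((ψ a : ↥(pglImage G)) : PGL2 ℓ) ∣ n
          rw [h8, ← h9, hr, DihedralGroup.orderOf_r]
          exact ⟨Nat.gcd n i.val, (Nat.div_mul_cancel (Nat.gcd_dvd_left n i.val)).symm⟩
        exact ⟨a.1, a.2, ha1, haord, haStab⟩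
      · exact ⟨i, rfl⟩
    have hcS : Nat.card S = 1 ∨ Nat.card S = 2 := by
      rcases S.bot_or_exists_ne_one with hbot | ⟨s, hsS, hs1⟩
      · left
        rw [hbot]
        exact Subgroup.card_bot
      · right
        obtain ⟨j, hj⟩ := hrot s hsS hs1
        have hSset : (S : Set ↥(pglImage G)) = {1, s} := by
          ext t
          constructor
          · intro ht
            by_cases ht1 : t = 1
            · exact Or.inl ht1
            · obtain ⟨i, hi⟩ := hrot t ht ht1
              right
              have hst : s * t ∈ S := mul_mem hsS ht
              by_cases hst1 : s * t = 1
              · -- t = s⁻¹ = s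
                have hss : s * s = 1 := by
                  apply e.injective
                  rw [_root_.map_mul, hj, DihedralGroup.sr_mul_sr, sub_self, _root_.map_one]
                  exact DihedralGroup.one_def.symm
                have := hst1.trans hss.symm
                exact mul_left_cancel this
              · obtain ⟨m, hm⟩ := hrot _ hst hst1
                rw [_root_.map_mul, hj, hi, DihedralGroup.sr_mul_sr] at hm
                exact absurd hm (by simp)
          · rintro (rfl | rfl)
            · exact S.one_mem
            · exact hsS
        have : Nat.card S = (S : Set ↥(pglImage G)).ncard := (Nat.card_coe_set_eq _)
        rw [this, hSset, Set.ncard_pair (Ne.symm hs1)]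
    have hd : Stab.index = (MulAction.orbit ↥G W).ncard := MulAction.index_stabilizer _ _
    rcases hcS with h | h <;> rw [h] at hdS
    · exact ⟨2, by omega⟩
    · exact ⟨1, by omega⟩
  have horbit : ∀ W : Line ℓ, Nat.card (MulAction.orbit ↥G W) = (MulAction.orbit ↥G W).ncard :=
    fun W => Nat.card_coe_set_eq _
  refine ⟨?_, hpart2, ?_⟩
  · intro W
    by_cases hc : ∃ x : GL2 ℓ, x ∈ G ∧ (x : PGL2 ℓ) ≠ 1 ∧ orderOf (x : PGL2 ℓ) ∣ n ∧ x • W = W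
    · obtain ⟨x, h1, h2, h3, h4⟩ := hc
      left
      rw [horbit]
      exact caseI W x h1 h2 h3 h4
    · right
      rw [horbit]
      exact caseII W hc
  · have hne : Fg.Nonempty := Set.nonempty_of_ncard_ne_zero (by rw [hFgcard]; norm_num)
    obtain ⟨W, hW⟩ := hne
    exact ⟨W, by rw [horbit]; exact caseI W g hgG hg1 (by rw [hordg]) hW⟩
end
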